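/- Let (X,d) be a complete metric space with a chosen basepoint x₀. Then the metric space (LIP(X), d̂) is complete. -/

import Mathlib

open Metric Set
open scoped Classical

/-- A bilipschitz auto-homeomorphism of a metric space `X`. -/
structure Bilip (X : Type) [MetricSpace X] where
  toFun : X → X
  invFun : X → X
  left_inv : Function.LeftInverse invFun toFun
  right_inv : Function.RightInverse invFun toFun
  bilip : ∃ K : ℝ, 1 ≤ K ∧ ∀ u v : X,
    (1 / K) * dist u v ≤ dist (toFun u) (toFun v) ∧
    dist (toFun u) (toFun v) ≤ K * dist u v

namespace Bilip

variable {X : Type} [MetricSpace X]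

/-- The set of bilipschitz constants of a map. -/
def lipSet (h : X → X) : Set ℝ :=
  {K | 1 ≤ K ∧ ∀ u v : X,
    (1 / K) * dist u v ≤ dist (h u) (h v) ∧ dist (h u) (h v) ≤ K * dist u v}

/-- `lip(h)`: the least bilipschitz constant of `h`. -/
noncomputable def lipConst (h : X → X) : ℝ := sInf (lipSet h)

/-- The semimetric `d_L(f,g) = log lip(f⁻¹ ∘ g)`. -/
noncomputable def dL (f g : Bilip X) : ℝ := Real.log (lipConst (f.invFun ∘ g.toFun))

/-- The semimetric `d_n(f,g) = sup {d(f x, g x) : x ∈ B(x₀, n)}`. -/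
noncomputable def dn (x₀ : X) (n : ℕ) (f g : Bilip X) : ℝ :=
  sSup ((fun x => dist (f.toFun x) (g.toFun x)) '' ball x₀ n)

/-- The semimetric `d_S(f,g) = Σ_n d_n(f,g) / 2ⁿ`. -/
noncomputable def dS (x₀ : X) (f g : Bilip X) : ℝ := ∑' n : ℕ, dn x₀ n f g / 2 ^ n

/-- The metric `d̂ = max(d_L, d_S)`. -/
noncomputable def dHat (x₀ : X) (f g : Bilip X) : ℝ := max (dL f g) (dS x₀ f g)

/-- Composition of bilipschitz homeomorphisms: `(f.comp g) x = f (g x)`. -/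
noncomputable def comp (f g : Bilip X) : Bilip X where
  toFun := f.toFun ∘ g.toFun
  invFun := g.invFun ∘ f.invFun
  left_inv := fun x => by simp [f.left_inv _, g.left_inv _]
  right_inv := fun x => by simp [f.right_inv _, g.right_inv _]
  bilip := by
    obtain ⟨K, hK1, hK⟩ := f.bilip
    obtain ⟨L, hL1, hL⟩ := g.bilip
    have hK0 : (0:ℝ) < K := lt_of_lt_of_le one_pos hK1
    have hL0 : (0:ℝ) < L := lt_of_lt_of_le one_pos hL1
    refine ⟨K * L, by nlinarith, fun u v => ?_⟩
    have h1 := hK (g.toFun u) (g.toFun v)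
    have h2 := hL u v
    constructor
    · calc (1 / (K * L)) * dist u v = (1 / K) * ((1 / L) * dist u v) := by
            ring
        _ ≤ (1 / K) * dist (g.toFun u) (g.toFun v) := by
            apply mul_le_mul_of_nonneg_left h2.1 (by positivity)
        _ ≤ dist (f.toFun (g.toFun u)) (f.toFun (g.toFun v)) := h1.1
    · calc dist (f.toFun (g.toFun u)) (f.toFun (g.toFun v))
          ≤ K * dist (g.toFun u) (g.toFun v) := h1.2
        _ ≤ K * (L * dist u v) := by
            apply mul_le_mul_of_nonneg_left h2.2 (le_of_lt hK0)
        _ = (K * L) * dist u v := by ring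

/-- The inverse of a bilipschitz homeomorphism. -/
noncomputable def inv (f : Bilip X) : Bilip X where
  toFun := f.invFun
  invFun := f.toFun
  left_inv := f.right_inv
  right_inv := f.left_inv
  bilip := by
    obtain ⟨K, hK1, hK⟩ := f.bilip
    have hK0 : (0:ℝ) < K := lt_of_lt_of_le one_pos hK1
    refine ⟨K, hK1, fun u v => ?_⟩
    have h := hK (f.invFun u) (f.invFun v)
    rw [f.right_inv u, f.right_inv v] at h
    constructor
    · rw [one_div, inv_mul_le_iff₀ hK0]
      exact h.2
    · have := h.1
      rw [one_div, inv_mul_le_iff₀ hK0] at this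
      nlinarith [this]

/-- The identity as a bilipschitz homeomorphism. -/
noncomputable def one : Bilip X where
  toFun := id
  invFun := id
  left_inv := fun _ => rfl
  right_inv := fun _ => rfl
  bilip := ⟨1, le_refl 1, fun u v => by norm_num⟩

end Bilip

section Helpers

open Bilip Filter

variable {X : Type} [MetricSpace X]

lemma lipSet_mono {h : X → X} {K K' : ℝ} (hK : K ∈ lipSet h) (hle : K ≤ K') :
    K' ∈ lipSet h := by
  obtain ⟨h1, h2⟩ := hK
  have h0 : (0:ℝ) < K := lt_of_lt_of_le one_pos h1
  have h0' : (0:ℝ) < K' := lt_of_lt_of_le h0 hle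
  refine ⟨h1.trans hle, fun u v => ?_⟩
  obtain ⟨hl, hr⟩ := h2 u v
  constructor
  · refine le_trans ?_ hl
    gcongr
  · exact hr.trans (mul_le_mul_of_nonneg_right hle dist_nonneg)

lemma lipSet_comp {h₁ h₂ : X → X} {K₁ K₂ : ℝ} (hK₁ : K₁ ∈ lipSet h₁)
    (hK₂ : K₂ ∈ lipSet h₂) : K₁ * K₂ ∈ lipSet (h₁ ∘ h₂) := by
  obtain ⟨h11, h1⟩ := hK₁
  obtain ⟨h21, h2⟩ := hK₂
  have hK0 : (0:ℝ) < K₁ := lt_of_lt_of_le one_pos h11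
  have hL0 : (0:ℝ) < K₂ := lt_of_lt_of_le one_pos h21
  refine ⟨by nlinarith, fun u v => ?_⟩
  have ha := h1 (h₂ u) (h₂ v)
  have hb := h2 u v
  constructor
  · calc (1 / (K₁ * K₂)) * dist u v = (1 / K₁) * ((1 / K₂) * dist u v) := by ring
      _ ≤ (1 / K₁) * dist (h₂ u) (h₂ v) :=
        mul_le_mul_of_nonneg_left hb.1 (by positivity)
      _ ≤ _ := ha.1
  · calc dist ((h₁ ∘ h₂) u) ((h₁ ∘ h₂) v) ≤ K₁ * dist (h₂ u) (h₂ v) := ha.2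
      _ ≤ K₁ * (K₂ * dist u v) := mul_le_mul_of_nonneg_left hb.2 hK0.le
      _ = (K₁ * K₂) * dist u v := by ring

lemma lipSet_inv (f : Bilip X) {K : ℝ} (hK : K ∈ lipSet f.toFun) :
    K ∈ lipSet f.invFun := by
  obtain ⟨h1, h2⟩ := hK
  have hK0 : (0:ℝ) < K := lt_of_lt_of_le one_pos h1
  refine ⟨h1, fun u v => ?_⟩
  have h := h2 (f.invFun u) (f.invFun v)
  rw [f.right_inv u, f.right_inv v] at h
  constructor
  · rw [one_div, inv_mul_le_iff₀ hK0]
    exact h.2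
  · have := h.1
    rw [one_div, inv_mul_le_iff₀ hK0] at this
    nlinarith [this]

lemma lipSet_nonneg {h : X → X} {K : ℝ} (hK : K ∈ lipSet h) : (0:ℝ) < K :=
  lt_of_lt_of_le one_pos hK.1

lemma one_le_lipConst {h : X → X} (hne : (lipSet h).Nonempty) : 1 ≤ lipConst h :=
  le_csInf hne fun _ hK => hK.1

lemma lipConst_le {h : X → X} {K : ℝ} (hK : K ∈ lipSet h) : lipConst h ≤ K :=
  csInf_le ⟨1, fun _ hK' => hK'.1⟩ hK

lemma lipSet_inv_comp_nonempty (f g : Bilip X) :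
    (lipSet (f.invFun ∘ g.toFun)).Nonempty := by
  obtain ⟨K, hK1, hK⟩ := ((Bilip.inv f).comp g).bilip
  exact ⟨K, hK1, hK⟩

lemma exists_lipSet_of_dL_lt {f g : Bilip X} {ε : ℝ} (h : dL f g < ε) :
    ∃ K ∈ lipSet (f.invFun ∘ g.toFun), K < Real.exp ε := by
  have hne := lipSet_inv_comp_nonempty f g
  have h1 : 1 ≤ lipConst (f.invFun ∘ g.toFun) := one_le_lipConst hne
  have hlt : lipConst (f.invFun ∘ g.toFun) < Real.exp ε := by
    have := (Real.log_lt_iff_lt_exp (lt_of_lt_of_le one_pos h1)).mp h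
    exact this
  obtain ⟨K, hK, hKlt⟩ := exists_lt_of_csInf_lt hne hlt
  exact ⟨K, hK, hKlt⟩

lemma dL_le_of_mem {f g : Bilip X} {ε : ℝ} {K : ℝ}
    (hK : K ∈ lipSet (f.invFun ∘ g.toFun)) (hKe : K ≤ Real.exp ε) :
    dL f g ≤ ε := by
  have hne : (lipSet (f.invFun ∘ g.toFun)).Nonempty := ⟨K, hK⟩
  have h1 : 1 ≤ lipConst (f.invFun ∘ g.toFun) := one_le_lipConst hne
  have : lipConst (f.invFun ∘ g.toFun) ≤ Real.exp ε := (lipConst_le hK).trans hKe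
  exact (Real.log_le_iff_le_exp (lt_of_lt_of_le one_pos h1)).mpr this

variable (x₀ : X)

lemma dn_nonneg (k : ℕ) (f g : Bilip X) : 0 ≤ dn x₀ k f g := by
  apply Real.sSup_nonneg
  rintro r ⟨x, -, rfl⟩
  exact dist_nonneg

lemma dist_le_aux {f g : Bilip X} {Kf Kg : ℝ} (hf : Kf ∈ lipSet f.toFun)
    (hg : Kg ∈ lipSet g.toFun) (k : ℝ) :
    ∀ x ∈ ball x₀ k, dist (f.toFun x) (g.toFun x)
      ≤ dist (f.toFun x₀) (g.toFun x₀) + (Kf + Kg) * k := by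
  intro x hx
  have hx' : dist x x₀ ≤ k := (mem_ball.mp hx).le
  have h1 : dist (f.toFun x) (f.toFun x₀) ≤ Kf * k :=
    ((hf.2 x x₀).2).trans (mul_le_mul_of_nonneg_left hx' (lipSet_nonneg hf).le)
  have h2 : dist (g.toFun x₀) (g.toFun x) ≤ Kg * k := by
    have := (hg.2 x x₀).2
    rw [dist_comm]
    exact this.trans (mul_le_mul_of_nonneg_left hx' (lipSet_nonneg hg).le)
  calc dist (f.toFun x) (g.toFun x)
      ≤ dist (f.toFun x) (f.toFun x₀) + dist (f.toFun x₀) (g.toFun x₀)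
        + dist (g.toFun x₀) (g.toFun x) := dist_triangle4 _ _ _ _
    _ ≤ Kf * k + dist (f.toFun x₀) (g.toFun x₀) + Kg * k := by
        gcongr
    _ = dist (f.toFun x₀) (g.toFun x₀) + (Kf + Kg) * k := by ring

lemma bddAbove_dn_image {f g : Bilip X} {Kf Kg : ℝ} (hf : Kf ∈ lipSet f.toFun)
    (hg : Kg ∈ lipSet g.toFun) (k : ℝ) :
    BddAbove ((fun x => dist (f.toFun x) (g.toFun x)) '' ball x₀ k) := by
  refine ⟨dist (f.toFun x₀) (g.toFun x₀) + (Kf + Kg) * k, ?_⟩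
  rintro r ⟨x, hx, rfl⟩
  exact dist_le_aux x₀ hf hg k x hx

lemma le_dn {f g : Bilip X} {Kf Kg : ℝ} (hf : Kf ∈ lipSet f.toFun)
    (hg : Kg ∈ lipSet g.toFun) {k : ℕ} {x : X} (hx : x ∈ ball x₀ (k:ℝ)) :
    dist (f.toFun x) (g.toFun x) ≤ dn x₀ k f g :=
  le_csSup (bddAbove_dn_image x₀ hf hg _) ⟨x, hx, rfl⟩

lemma dn_le {f g : Bilip X} {k : ℕ} {c : ℝ}
    (h : ∀ x ∈ ball x₀ (k:ℝ), dist (f.toFun x) (g.toFun x) ≤ c) (hc : 0 ≤ c) :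
    dn x₀ k f g ≤ c := by
  apply Real.sSup_le _ hc
  rintro r ⟨x, hx, rfl⟩
  exact h x hx

lemma summable_dn {f g : Bilip X} {Kf Kg : ℝ} (hf : Kf ∈ lipSet f.toFun)
    (hg : Kg ∈ lipSet g.toFun) :
    Summable (fun k : ℕ => dn x₀ k f g / 2 ^ k) := by
  set C := dist (f.toFun x₀) (g.toFun x₀)
  set D := Kf + Kg
  have hD : 0 ≤ D := by
    have := lipSet_nonneg hf; have := lipSet_nonneg hg
    positivity
  have hsum : Summable (fun k : ℕ => (C + D * k) * (1/2) ^ k) := by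
    have h1 : Summable (fun k : ℕ => C * (1/2:ℝ) ^ k) :=
      (summable_geometric_of_lt_one (by norm_num) (by norm_num)).mul_left C
    have h2 : Summable (fun k : ℕ => (k:ℝ) * (1/2:ℝ) ^ k) := by
      have := summable_pow_mul_geometric_of_norm_lt_one (R := ℝ) 1
        (r := (1/2:ℝ)) (by norm_num)
      simpa using this
    have := h1.add (h2.mul_left D)
    apply this.congr
    intro k; ring
  apply Summable.of_nonneg_of_le _ _ hsum
  · intro k
    have := dn_nonneg x₀ k f g
    positivity
  · intro k
    rw [div_eq_mul_inv, ← inv_pow]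
    have hdn : dn x₀ k f g ≤ C + D * k := by
      apply dn_le
      · intro x hx
        simpa [mul_comm] using dist_le_aux x₀ hf hg (k:ℝ) x hx
      · have hC : 0 ≤ C := dist_nonneg
        positivity
    have : ((2:ℝ)⁻¹) ^ k = (1/2:ℝ)^k := by norm_num
    rw [this]
    exact mul_le_mul_of_nonneg_right hdn (by positivity)

lemma dn_le_two_pow_mul_dS {f g : Bilip X} {Kf Kg : ℝ} (hf : Kf ∈ lipSet f.toFun)
    (hg : Kg ∈ lipSet g.toFun) (k : ℕ) :
    dn x₀ k f g ≤ 2 ^ k * dS x₀ f g := by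
  have hle : dn x₀ k f g / 2 ^ k ≤ dS x₀ f g := by
    apply Summable.le_tsum (summable_dn x₀ hf hg) k
    intro i _
    have := dn_nonneg x₀ i f g
    positivity
  have h2 : (0:ℝ) < 2 ^ k := by positivity
  calc dn x₀ k f g = 2 ^ k * (dn x₀ k f g / 2 ^ k) := by field_simp
    _ ≤ 2 ^ k * dS x₀ f g := mul_le_mul_of_nonneg_left hle h2.le

end Helpers

/-- If X is a complete metric space, then (LIP(X), d̂) is a complete metric
space: every d̂-Cauchy sequence d̂-converges. -/
theorem lip_complete (X : Type) [MetricSpace X] [CompleteSpace X] (x₀ : X) :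
    ∀ F : ℕ → Bilip X,
      (∀ ε : ℝ, 0 < ε → ∃ N : ℕ, ∀ m ≥ N, ∀ n ≥ N,
        Bilip.dHat x₀ (F m) (F n) < ε) →
      ∃ g : Bilip X, ∀ ε : ℝ, 0 < ε → ∃ N : ℕ, ∀ n ≥ N,
        Bilip.dHat x₀ (F n) g < ε := by
  intro F hF
  classical
  have hdL : ∀ m n, Bilip.dL (F m) (F n) ≤ Bilip.dHat x₀ (F m) (F n) :=
    fun m n => le_max_left _ _
  have hdS : ∀ m n, Bilip.dS x₀ (F m) (F n) ≤ Bilip.dHat x₀ (F m) (F n) :=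
    fun m n => le_max_right _ _
  choose Kb hKb using fun n => (F n).bilip
  have hKbmem : ∀ n, Kb n ∈ Bilip.lipSet (F n).toFun := fun n => ⟨(hKb n).1, (hKb n).2⟩
  obtain ⟨N₁, hN₁⟩ := hF 1 one_pos
  -- A uniform bilipschitz constant for all the F n
  set K : ℝ := max ((Finset.range (N₁+1)).sup' ⟨0, by simp⟩ Kb) (Kb N₁ * Real.exp 1)
    with hKdef
  have hKmem : ∀ n, K ∈ Bilip.lipSet (F n).toFun := by
    intro n
    rcases le_or_gt n N₁ with h | h
    · apply lipSet_mono (hKbmem n)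
      exact le_trans (Finset.le_sup' Kb (Finset.mem_range.mpr (by omega))) (le_max_left _ _)
    · have hd : Bilip.dL (F N₁) (F n) < 1 :=
        lt_of_le_of_lt (hdL _ _) (hN₁ N₁ le_rfl n h.le)
      obtain ⟨L, hL, hLlt⟩ := exists_lipSet_of_dL_lt hd
      have heq : (F n).toFun = (F N₁).toFun ∘ ((F N₁).invFun ∘ (F n).toFun) := by
        funext x
        simp [Function.comp, (F N₁).right_inv _]
      rw [heq]
      apply lipSet_mono (lipSet_comp (hKbmem N₁) hL)
      exact le_trans (mul_le_mul_of_nonneg_left hLlt.le (lipSet_nonneg (hKbmem N₁)).le)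
        (le_max_right _ _)
  have hK1 : 1 ≤ K := (hKmem 0).1
  have hK0 : (0:ℝ) < K := lt_of_lt_of_le one_pos hK1
  -- Uniform bound on dist x₀ (F m x₀)
  have hball1 : x₀ ∈ ball x₀ ((1:ℕ):ℝ) := by simp
  set c : ℝ := (Finset.range (N₁+1)).sup' ⟨0, by simp⟩
      (fun m => dist x₀ ((F m).toFun x₀)) + 2 with hcdef
  have hcs : (Finset.range (N₁+1)).sup' ⟨0, by simp⟩
      (fun m => dist x₀ ((F m).toFun x₀)) ≥ dist x₀ ((F N₁).toFun x₀) :=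
    Finset.le_sup' (fun m => dist x₀ ((F m).toFun x₀)) (Finset.mem_range.mpr (Nat.lt_succ_self N₁))
  have hc : ∀ m, dist x₀ ((F m).toFun x₀) ≤ c := by
    intro m
    rcases le_or_gt m N₁ with h | h
    · have := Finset.le_sup' (f := fun m => dist x₀ ((F m).toFun x₀))
        (s := Finset.range (N₁+1)) (Finset.mem_range.mpr (by omega : m < N₁+1))
      rw [hcdef]; linarith
    · have h2 : dist ((F N₁).toFun x₀) ((F m).toFun x₀) ≤ 2 := by
        have ha := le_dn x₀ (hKmem N₁) (hKmem m) hball1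
        have hb := dn_le_two_pow_mul_dS x₀ (hKmem N₁) (hKmem m) 1
        have hd : Bilip.dS x₀ (F N₁) (F m) ≤ 1 :=
          le_of_lt (lt_of_le_of_lt (hdS _ _) (hN₁ N₁ le_rfl m h.le))
        have : (2:ℝ)^(1:ℕ) = 2 := by norm_num
        nlinarith
      calc dist x₀ ((F m).toFun x₀)
          ≤ dist x₀ ((F N₁).toFun x₀) + dist ((F N₁).toFun x₀) ((F m).toFun x₀) :=
            dist_triangle _ _ _
        _ ≤ c := by rw [hcdef]; linarith
  -- Pointwise Cauchy for the forward maps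
  have hCauchyF : ∀ x : X, CauchySeq (fun n => (F n).toFun x) := by
    intro x
    rw [Metric.cauchySeq_iff]
    intro ε hε
    set k : ℕ := ⌈dist x x₀⌉₊ + 1 with hk
    have hxk : x ∈ ball x₀ (k:ℝ) := by
      rw [mem_ball, hk]
      push_cast
      linarith [Nat.le_ceil (dist x x₀)]
    obtain ⟨N, hN⟩ := hF (ε / 2^k) (by positivity)
    refine ⟨N, fun m hm n hn => ?_⟩
    have h2k : (0:ℝ) < 2^k := by positivity
    calc dist ((F m).toFun x) ((F n).toFun x) ≤ Bilip.dn x₀ k (F m) (F n) :=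
          le_dn x₀ (hKmem m) (hKmem n) hxk
      _ ≤ 2^k * Bilip.dS x₀ (F m) (F n) := dn_le_two_pow_mul_dS x₀ (hKmem m) (hKmem n) k
      _ < 2^k * (ε / 2^k) := by
          have := lt_of_le_of_lt (hdS m n) (hN m hm n hn)
          exact mul_lt_mul_of_pos_left this h2k
      _ = ε := by field_simp
  choose G hG using fun x => cauchySeq_tendsto_of_complete (hCauchyF x)
  -- Pointwise Cauchy for the inverse maps
  have hCauchyI : ∀ y : X, CauchySeq (fun n => (F n).invFun y) := by
    intro y
    rw [Metric.cauchySeq_iff]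
    intro ε hε
    set k : ℕ := ⌈K * (dist y x₀ + c)⌉₊ + 1 with hk
    obtain ⟨N, hN⟩ := hF (ε / (K * 2^k)) (by positivity)
    refine ⟨N, fun m hm n hn => ?_⟩
    set z := (F m).invFun y with hz
    have hzb : z ∈ ball x₀ (k:ℝ) := by
      rw [mem_ball]
      have h1 : (1/K) * dist z x₀ ≤ dist ((F m).toFun z) ((F m).toFun x₀) :=
        ((hKmem m).2 z x₀).1
      rw [hz, (F m).right_inv y] at h1
      have h2 : dist y ((F m).toFun x₀) ≤ dist y x₀ + c := by
        calc dist y ((F m).toFun x₀) ≤ dist y x₀ + dist x₀ ((F m).toFun x₀) :=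
              dist_triangle _ _ _
          _ ≤ dist y x₀ + c := by linarith [hc m]
      have h3 : dist z x₀ ≤ K * (dist y x₀ + c) := by
        rw [one_div, inv_mul_le_iff₀ hK0] at h1
        calc dist z x₀ ≤ K * dist y ((F m).toFun x₀) := h1
          _ ≤ K * (dist y x₀ + c) := mul_le_mul_of_nonneg_left h2 hK0.le
      calc dist z x₀ ≤ K * (dist y x₀ + c) := h3
        _ ≤ ⌈K * (dist y x₀ + c)⌉₊ := Nat.le_ceil _
        _ < (k:ℝ) := by rw [hk]; push_cast; linarith
    have hlow : (1/K) * dist ((F m).invFun y) ((F n).invFun y)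
        ≤ dist ((F n).toFun z) ((F m).toFun z) := by
      have h1 : (1/K) * dist z ((F n).invFun y)
          ≤ dist ((F n).toFun z) ((F n).toFun ((F n).invFun y)) := ((hKmem n).2 _ _).1
      rw [(F n).right_inv y] at h1
      have h2 : (F m).toFun z = y := (F m).right_inv y
      rw [h2]
      exact h1
    have h2k : (0:ℝ) < 2^k := by positivity
    have hup : dist ((F n).toFun z) ((F m).toFun z) < 2^k * (ε / (K * 2^k)) := by
      calc dist ((F n).toFun z) ((F m).toFun z) ≤ Bilip.dn x₀ k (F n) (F m) :=
            le_dn x₀ (hKmem n) (hKmem m) hzb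
        _ ≤ 2^k * Bilip.dS x₀ (F n) (F m) := dn_le_two_pow_mul_dS x₀ (hKmem n) (hKmem m) k
        _ < 2^k * (ε / (K * 2^k)) := by
            have := lt_of_le_of_lt (hdS n m) (hN n hn m hm)
            exact mul_lt_mul_of_pos_left this h2k
    have : 2^k * (ε / (K * 2^k)) = ε / K := by field_simp
    rw [this] at hup
    rw [one_div, inv_mul_le_iff₀ hK0] at hlow
    calc dist ((F m).invFun y) ((F n).invFun y)
        ≤ K * dist ((F n).toFun z) ((F m).toFun z) := hlow
      _ < K * (ε / K) := mul_lt_mul_of_pos_left hup hK0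
      _ = ε := by field_simp
  choose Ginv hGinv using fun y => cauchySeq_tendsto_of_complete (hCauchyI y)
  -- Lipschitz maps preserve limits
  have hLip : ∀ (h : X → X), K ∈ Bilip.lipSet h → ∀ (s : ℕ → X) (a : X),
      Filter.Tendsto s Filter.atTop (nhds a) →
      Filter.Tendsto (fun n => h (s n)) Filter.atTop (nhds (h a)) := by
    intro h hh s a hs
    rw [tendsto_iff_dist_tendsto_zero]
    apply squeeze_zero (fun n => dist_nonneg) (fun n => (hh.2 (s n) a).2)
    have := (tendsto_iff_dist_tendsto_zero.mp hs).const_mul K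
    simpa using this
  -- left and right inverse
  have hleft : Function.LeftInverse Ginv G := by
    intro x
    refine tendsto_nhds_unique (hGinv (G x)) ?_
    rw [tendsto_iff_dist_tendsto_zero]
    apply squeeze_zero (f := fun n => dist ((F n).invFun (G x)) x)
      (g := fun n => K * dist (G x) ((F n).toFun x)) (fun n => dist_nonneg)
    · intro n
      have h1 := ((lipSet_inv (F n) (hKmem n)).2 (G x) ((F n).toFun x)).2
      rw [(F n).left_inv x] at h1
      exact h1
    · have h2 : Filter.Tendsto (fun n => dist (G x) ((F n).toFun x))
          Filter.atTop (nhds 0) := by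
        have := tendsto_iff_dist_tendsto_zero.mp (hG x)
        simpa [dist_comm] using this
      have := h2.const_mul K
      simpa using this
  have hright : Function.RightInverse Ginv G := by
    intro y
    refine tendsto_nhds_unique (hG (Ginv y)) ?_
    rw [tendsto_iff_dist_tendsto_zero]
    apply squeeze_zero (f := fun n => dist ((F n).toFun (Ginv y)) y)
      (g := fun n => K * dist (Ginv y) ((F n).invFun y)) (fun n => dist_nonneg)
    · intro n
      have h1 := ((hKmem n).2 (Ginv y) ((F n).invFun y)).2
      rw [(F n).right_inv y] at h1
      exact h1
    · have h2 : Filter.Tendsto (fun n => dist (Ginv y) ((F n).invFun y))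
          Filter.atTop (nhds 0) := by
        have := tendsto_iff_dist_tendsto_zero.mp (hGinv y)
        simpa [dist_comm] using this
      have := h2.const_mul K
      simpa using this
  -- G is K-bilipschitz
  have hGbilip : ∀ u v : X, (1 / K) * dist u v ≤ dist (G u) (G v) ∧
      dist (G u) (G v) ≤ K * dist u v := by
    intro u v
    have hT : Filter.Tendsto (fun n => dist ((F n).toFun u) ((F n).toFun v))
        Filter.atTop (nhds (dist (G u) (G v))) := (hG u).dist (hG v)
    constructor
    · exact ge_of_tendsto' hT fun n => ((hKmem n).2 u v).1
    · exact le_of_tendsto' hT fun n => ((hKmem n).2 u v).2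
  set g : Bilip X := ⟨G, Ginv, hleft, hright, ⟨K, hK1, hGbilip⟩⟩ with hgdef
  have hgto : g.toFun = G := rfl
  have hKg : K ∈ Bilip.lipSet g.toFun := ⟨hK1, hGbilip⟩
  -- key uniform-on-balls convergence estimate
  have hkey : ∀ δ : ℝ, 0 < δ → ∃ N, ∀ n ≥ N, ∀ k : ℕ, ∀ x ∈ ball x₀ (k:ℝ),
      dist ((F n).toFun x) (G x) ≤ 2^k * δ := by
    intro δ hδ
    obtain ⟨N, hN⟩ := hF δ hδ
    refine ⟨N, fun n hn k x hx => ?_⟩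
    have hT : Filter.Tendsto (fun m => dist ((F n).toFun x) ((F m).toFun x))
        Filter.atTop (nhds (dist ((F n).toFun x) (G x))) :=
      tendsto_const_nhds.dist (hG x)
    apply le_of_tendsto hT
    filter_upwards [Filter.eventually_ge_atTop N] with m hm
    have h2k : (0:ℝ) < 2^k := by positivity
    calc dist ((F n).toFun x) ((F m).toFun x) ≤ Bilip.dn x₀ k (F n) (F m) :=
          le_dn x₀ (hKmem n) (hKmem m) hx
      _ ≤ 2^k * Bilip.dS x₀ (F n) (F m) := dn_le_two_pow_mul_dS x₀ (hKmem n) (hKmem m) k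
      _ ≤ 2^k * δ := by
          have := le_of_lt (lt_of_le_of_lt (hdS n m) (hN n hn m hm))
          exact mul_le_mul_of_nonneg_left this h2k.le
  refine ⟨g, ?_⟩
  intro ε hε
  obtain ⟨N₂, hN₂⟩ := hF (ε/4) (by positivity)
  obtain ⟨N₄, hN₄⟩ := hF (ε/2) (by positivity)
  -- d_S part
  have hdSg : ∀ n ≥ N₂, Bilip.dS x₀ (F n) g ≤ ε/2 := by
    intro n hn
    apply Real.tsum_le_of_sum_range_le
      (fun k => div_nonneg (dn_nonneg x₀ k _ _) (by positivity))
    intro J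
    apply le_of_forall_pos_le_add
    intro η hη
    set δ := η / (J+1) with hδdef
    have hδ : (0:ℝ) < δ := by positivity
    obtain ⟨N₃, hN₃⟩ := hkey δ hδ
    set m := max N₂ N₃ with hmdef
    have hm2 : m ≥ N₂ := le_max_left _ _
    have hm3 : m ≥ N₃ := le_max_right _ _
    have hterm : ∀ k : ℕ, Bilip.dn x₀ k (F n) g ≤ Bilip.dn x₀ k (F n) (F m) + 2^k * δ := by
      intro k
      have h2k : (0:ℝ) < 2^k := by positivity
      apply dn_le
      · intro x hx
        calc dist ((F n).toFun x) (g.toFun x)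
            ≤ dist ((F n).toFun x) ((F m).toFun x) + dist ((F m).toFun x) (G x) := by
              rw [hgto]; exact dist_triangle _ _ _
          _ ≤ Bilip.dn x₀ k (F n) (F m) + 2^k * δ :=
              add_le_add (le_dn x₀ (hKmem n) (hKmem m) hx) (hN₃ m hm3 k x hx)
      · have := dn_nonneg x₀ k (F n) (F m)
        positivity
    have h2 : ∀ k : ℕ, Bilip.dn x₀ k (F n) g / 2^k
        ≤ Bilip.dn x₀ k (F n) (F m) / 2^k + δ := by
      intro k
      have h2k : (0:ℝ) < 2^k := by positivity
      calc Bilip.dn x₀ k (F n) g / 2^k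
          ≤ (Bilip.dn x₀ k (F n) (F m) + 2^k * δ) / 2^k :=
            (div_le_div_iff_of_pos_right h2k).mpr (hterm k)
        _ = Bilip.dn x₀ k (F n) (F m) / 2^k + δ := by field_simp
    have hJδ : (J:ℝ) * δ ≤ η := by
      have h1 : δ * ((J:ℝ)+1) = η := by
        rw [hδdef]; field_simp
      nlinarith [hδ.le, Nat.cast_nonneg (α := ℝ) J]
    calc ∑ k ∈ Finset.range J, Bilip.dn x₀ k (F n) g / 2^k
        ≤ ∑ k ∈ Finset.range J, (Bilip.dn x₀ k (F n) (F m) / 2^k + δ) :=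
          Finset.sum_le_sum fun k _ => h2 k
      _ = (∑ k ∈ Finset.range J, Bilip.dn x₀ k (F n) (F m) / 2^k) + J * δ := by
          rw [Finset.sum_add_distrib, Finset.sum_const, Finset.card_range,
            nsmul_eq_mul]
      _ ≤ Bilip.dS x₀ (F n) (F m) + J * δ := by
          apply add_le_add_left
          apply Summable.sum_le_tsum _ (fun k _ => div_nonneg (dn_nonneg x₀ k _ _) (by positivity))
            (summable_dn x₀ (hKmem n) (hKmem m))
      _ ≤ ε/4 + J * δ := by
          have := le_of_lt (lt_of_le_of_lt (hdS n m) (hN₂ n hn m hm2))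
          linarith
      _ ≤ ε/2 + η := by linarith
  -- d_L part
  have hdLg : ∀ n ≥ N₄, Bilip.dL (F n) g ≤ ε/2 := by
    intro n hn
    have hmem : Real.exp (ε/2) ∈ Bilip.lipSet ((F n).invFun ∘ g.toFun) := by
      have hexp1 : (1:ℝ) ≤ Real.exp (ε/2) := Real.one_le_exp (by positivity)
      have hexp0 : (0:ℝ) < Real.exp (ε/2) := Real.exp_pos _
      refine ⟨hexp1, fun u v => ?_⟩
      have hTu : Filter.Tendsto (fun m => (F n).invFun ((F m).toFun u))
          Filter.atTop (nhds ((F n).invFun (G u))) :=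
        hLip _ (lipSet_inv (F n) (hKmem n)) _ _ (hG u)
      have hTv : Filter.Tendsto (fun m => (F n).invFun ((F m).toFun v))
          Filter.atTop (nhds ((F n).invFun (G v))) :=
        hLip _ (lipSet_inv (F n) (hKmem n)) _ _ (hG v)
      have hT : Filter.Tendsto
          (fun m => dist ((F n).invFun ((F m).toFun u)) ((F n).invFun ((F m).toFun v)))
          Filter.atTop (nhds (dist ((F n).invFun (G u)) ((F n).invFun (G v)))) :=
        hTu.dist hTv
      have hev : ∀ᶠ m in Filter.atTop,
          (1 / Real.exp (ε/2)) * dist u v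
            ≤ dist ((F n).invFun ((F m).toFun u)) ((F n).invFun ((F m).toFun v)) ∧
          dist ((F n).invFun ((F m).toFun u)) ((F n).invFun ((F m).toFun v))
            ≤ Real.exp (ε/2) * dist u v := by
        filter_upwards [Filter.eventually_ge_atTop N₄] with m hm
        have hd : Bilip.dL (F n) (F m) < ε/2 :=
          lt_of_le_of_lt (hdL n m) (hN₄ n hn m hm)
        obtain ⟨L, hL, hLlt⟩ := exists_lipSet_of_dL_lt hd
        have hL0 := lipSet_nonneg hL
        have h := hL.2 u v
        simp only [Function.comp_apply] at h
        constructor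
        · refine le_trans ?_ h.1
          apply mul_le_mul_of_nonneg_right _ dist_nonneg
          apply one_div_le_one_div_of_le hL0 hLlt.le
        · exact h.2.trans (mul_le_mul_of_nonneg_right hLlt.le dist_nonneg)
      have hgG : g.toFun = G := rfl
      simp only [Function.comp_apply, hgG]
      constructor
      · exact ge_of_tendsto hT (hev.mono fun m h => h.1)
      · exact le_of_tendsto hT (hev.mono fun m h => h.2)
    exact dL_le_of_mem hmem le_rfl
  refine ⟨max N₂ N₄, fun n hn => ?_⟩
  have h2 : n ≥ N₂ := le_trans (le_max_left _ _) hn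
  have h4 : n ≥ N₄ := le_trans (le_max_right _ _) hn
  apply max_lt
  · exact lt_of_le_of_lt (hdLg n h4) (by linarith)
  · exact lt_of_le_of_lt (hdSg n h2) (by linarith)
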